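/- Let K ≥ 1 and j ≥ 0 be integers and let a, b be real numbers. Then the symmetric limit lim_{M→∞} ∑_{m=−M}^{M} I_{C₀}(K,j;a−m,b) exists and F(K,j;a,b) = (1/2)·δ_{j} + (1/2)·exp(2πi a K + 2πi b K²) + lim_{M→∞} ∑_{m=−M}^{M} I_{C₀}(K,j;a−m,b), where δ_j equals 1 if j = 0 and 0 otherwise. -/

import Mathlib

/-!
Put `f(t) = t^j e(at + bt²)` with `e(x) = exp(2πix)` and `J(m) = ∫_0^K e(-mt) f(t) dt`,
so that `F = K^{-j} ∑_{k ≤ K} f(k)` and `I_{C₀}(K,j;a-m,b) = K^{-j} J(m)`.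
For `m ≠ 0`, integrating by parts twice (`e(mt) = 1` at the integer endpoints) gives
`J(m) + J(-m) = (2(f'(K) - f'(0)) - ∫_0^K (e(-mt) + e(mt)) f''(t) dt) / (4π²m²)`.
Summing over `m ≥ 1` with `∑ 1/m² = π²/6` and the Fourier series
`∑_{m ≥ 1} (e(mt) + e(-mt))/m² = 2π² B₂({t})` gives
`(f'(K) - f'(0))/12 - ½ ∫_0^K B₂({t}) f''`, which the second-order Euler–Maclaurin formula
turns into `∑_{k ≤ K} f(k) - (f(0) + f(K))/2 - J(0)`.
-/

open scoped BigOperators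

/-- The truncated theta function
`F(K,j;a,b) = K^{-j} ∑_{k=0}^{K} k^j exp(2πi a k + 2πi b k²)`,
with the convention `0^0 = 1`. -/
noncomputable def truncTheta (K j : ℕ) (a b : ℝ) : ℂ :=
  ((K : ℂ) ^ j)⁻¹ * ∑ k ∈ Finset.range (K + 1),
    (k : ℂ) ^ j *
      Complex.exp (2 * (Real.pi : ℂ) * Complex.I * (a : ℂ) * (k : ℂ) +
        2 * (Real.pi : ℂ) * Complex.I * (b : ℂ) * (k : ℂ) ^ 2)

/-- `I_{C₀}(K,j;c,b) = K^{-j} ∫_0^K t^j exp(2πi c t + 2πi b t²) dt`. -/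
noncomputable def IC0 (K j : ℕ) (c b : ℝ) : ℂ :=
  ((K : ℂ) ^ j)⁻¹ * ∫ t in (0 : ℝ)..(K : ℝ), (t : ℂ) ^ j *
    Complex.exp (2 * (Real.pi : ℂ) * Complex.I * (c : ℂ) * (t : ℂ) +
      2 * (Real.pi : ℂ) * Complex.I * (b : ℂ) * (t : ℂ) ^ 2)

open Complex Filter Topology Finset
open scoped Real

namespace TruncTheta

noncomputable def intervalFourierCoeff (K : ℕ) (f : ℝ → ℂ) (m : ℤ) : ℂ :=
  ∫ t in (0 : ℝ)..K, fourier (-m) (t : UnitAddCircle) * f t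

lemma fourier_natCast (n : ℤ) (k : ℕ) : fourier n ((k : ℝ) : UnitAddCircle) = 1 := by
  rw [fourier_coe_apply, ofReal_one, div_one,
    show 2 * (π : ℂ) * I * n * (k : ℝ) = (n * k : ℤ) * (2 * π * I) by push_cast; ring,
    exp_int_mul_two_pi_mul_I]

lemma continuous_fourier_coe (n : ℤ) : Continuous fun t : ℝ => fourier n (t : UnitAddCircle) :=
  (map_continuous _).comp (AddCircle.continuous_mk' 1)

variable {f f' f'' : ℝ → ℂ} (K : ℕ)

lemma intervalFourierCoeff_deriv (hf : ∀ t, HasDerivAt f (f' t) t) (hf' : Continuous f')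
    (m : ℤ) :
    intervalFourierCoeff K f' m
      = f K - f 0 + 2 * π * I * m * intervalFourierCoeff K f m := by
  have hexp (t : ℝ) : HasDerivAt (fun y : ℝ => fourier (-m) (y : UnitAddCircle))
      (-2 * π * I * m * fourier (-m) (t : UnitAddCircle)) t := by
    simpa only [ofReal_one, div_one] using hasDerivAt_fourier_neg 1 m t
  have hibp := intervalIntegral.integral_mul_deriv_eq_deriv_mul (a := 0) (b := (K : ℝ))
    (fun t _ => hexp t) (fun t _ => hf t)
    ((continuous_const.mul (continuous_fourier_coe _)).intervalIntegrable _ _)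
    (hf'.intervalIntegrable _ _)
  rw [intervalFourierCoeff, hibp, fourier_natCast, AddCircle.coe_zero, fourier_eval_zero,
    intervalFourierCoeff, ← intervalIntegral.integral_const_mul]
  simp only [one_mul, mul_assoc, neg_mul, intervalIntegral.integral_neg]
  ring

lemma intervalFourierCoeff_add_neg (hf : ∀ t, HasDerivAt f (f' t) t)
    (hf' : ∀ t, HasDerivAt f' (f'' t) t) (hf'' : Continuous f'') {m : ℤ} (hm : m ≠ 0) :
    intervalFourierCoeff K f m + intervalFourierCoeff K f (-m)
      = (2 * (f' K - f' 0) - (intervalFourierCoeff K f'' m + intervalFourierCoeff K f'' (-m)))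
        / (4 * π ^ 2 * m ^ 2) := by
  have hf'_cont : Continuous f' := continuous_iff_continuousAt.2 fun t => (hf' t).continuousAt
  have hJf' := intervalFourierCoeff_deriv K hf hf'_cont m
  have hJf'' := intervalFourierCoeff_deriv K hf' hf'' m
  have hJf'_neg := intervalFourierCoeff_deriv K hf hf'_cont (-m)
  have hJf''_neg := intervalFourierCoeff_deriv K hf' hf'' (-m)
  push_cast at hJf'_neg hJf''_neg
  have hne : (4 * π ^ 2 * m ^ 2 : ℂ) ≠ 0 := mul_ne_zero (mul_ne_zero (by norm_num)
    (pow_ne_zero _ (ofReal_ne_zero.2 Real.pi_ne_zero))) (pow_ne_zero _ (Int.cast_ne_zero.2 hm))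
  rw [eq_div_iff hne]
  linear_combination hJf'' + hJf''_neg + (2 * π * I * m) * hJf' - (2 * π * I * m) * hJf'_neg
    + 4 * π ^ 2 * m ^ 2 * (intervalFourierCoeff K f m + intervalFourierCoeff K f (-m)) * I_sq

lemma hasSum_fourier_add_fourier_neg_div_sq (t : ℝ) :
    HasSum (fun n : ℕ => 1 / (n : ℂ) ^ 2 *
        (fourier (-n) (t : UnitAddCircle) + fourier n (t : UnitAddCircle)))
      (2 * π ^ 2 * (bernoulliFun 2 (Int.fract t) : ℂ)) := by
  have h := hasSum_one_div_nat_pow_mul_fourier le_rfl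
    ⟨Int.fract_nonneg t, (Int.fract_lt_one t).le⟩
  simp only [AddCircle.coe_fract, neg_one_sq, one_mul] at h
  convert h using 2 with n
  · rw [add_comm]
  · simp only [Nat.factorial_two, Nat.cast_ofNat, mul_pow, I_sq]
    ring

lemma hasSum_div_sq_intervalFourierCoeff_add_neg {g : ℝ → ℂ} (hg : Continuous g) :
    HasSum (fun m : ℕ => 1 / (m : ℂ) ^ 2 *
        (intervalFourierCoeff K g m + intervalFourierCoeff K g (-m)))
      (∫ t in (0 : ℝ)..K, 2 * π ^ 2 * (bernoulliFun 2 (Int.fract t) : ℂ) * g t) := by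
  have hint (n : ℤ) : IntervalIntegrable (fun t : ℝ => fourier n (t : UnitAddCircle) * g t)
      MeasureTheory.volume 0 K :=
    ((continuous_fourier_coe n).mul hg).intervalIntegrable _ _
  have hterm (m : ℕ) : 1 / (m : ℂ) ^ 2 *
      (intervalFourierCoeff K g m + intervalFourierCoeff K g (-m)) =
        ∫ t in (0 : ℝ)..K, 1 / (m : ℂ) ^ 2 *
          (fourier (-m) (t : UnitAddCircle) + fourier m (t : UnitAddCircle)) * g t := by
    rw [intervalFourierCoeff, intervalFourierCoeff, neg_neg,
      ← intervalIntegral.integral_add (hint _) (hint _), ← intervalIntegral.integral_const_mul]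
    congr 1 with t
    ring
  simp_rw [hterm]
  obtain ⟨C, hC⟩ := (isCompact_uIcc (a := (0 : ℝ)) (b := K)).exists_bound_of_continuousOn
    hg.continuousOn
  refine intervalIntegral.hasSum_integral_of_dominated_convergence
    (fun m _ => 1 / (m : ℝ) ^ 2 * 2 * C)
    (fun m => (by fun_prop : Continuous _).aestronglyMeasurable) (fun m => ?_)
    (.of_forall fun _ _ => ((Real.summable_one_div_nat_pow.2 one_lt_two).mul_right 2).mul_right C)
    intervalIntegrable_const
    (.of_forall fun t _ => (hasSum_fourier_add_fourier_neg_div_sq t).mul_right (g t))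
  refine .of_forall fun t ht => ?_
  have hsum : ‖fourier (-m) (t : UnitAddCircle) + fourier m (t : UnitAddCircle)‖ ≤ 2 :=
    (norm_add_le _ _).trans (by simp only [fourier_apply, Circle.norm_coe]; norm_num)
  rw [norm_mul, norm_mul]
  gcongr
  · simp
  · exact hC t (Set.uIoc_subset_uIcc ht)

lemma integral_bernoulliFun_two_mul (hf : ∀ t, HasDerivAt f (f' t) t)
    (hf' : ∀ t, HasDerivAt f' (f'' t) t) (hf'' : Continuous f'') (k : ℕ) :
    ∫ t in (k : ℝ)..k + 1, (bernoulliFun 2 (t - k) : ℂ) * f'' t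
      = (f' (k + 1) - f' k) / 6 - (f k + f (k + 1)) + 2 * ∫ t in (k : ℝ)..k + 1, f t := by
  have hf'_cont : Continuous f' := continuous_iff_continuousAt.2 fun t => (hf' t).continuousAt
  have hB₂ (t : ℝ) : HasDerivAt (fun t : ℝ => (bernoulliFun 2 (t - k) : ℂ))
      ((2 * bernoulliFun 1 (t - k) : ℝ) : ℂ) t := by
    simpa using ((hasDerivAt_bernoulliFun 2 (t - k)).comp_sub_const t k).ofReal_comp
  have hB₁ (t : ℝ) :
      HasDerivAt (fun t : ℝ => ((2 * bernoulliFun 1 (t - k) : ℝ) : ℂ)) 2 t := by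
    simpa using (((hasDerivAt_bernoulliFun 1 (t - k)).comp_sub_const t k).const_mul 2).ofReal_comp
  rw [intervalIntegral.integral_mul_deriv_eq_deriv_mul (fun t _ => hB₂ t) (fun t _ => hf' t)
      ((by fun_prop : Continuous _).intervalIntegrable _ _) (hf''.intervalIntegrable _ _),
    intervalIntegral.integral_mul_deriv_eq_deriv_mul (fun t _ => hB₁ t) (fun t _ => hf t)
      intervalIntegrable_const (hf'_cont.intervalIntegrable _ _),
    intervalIntegral.integral_const_mul]
  simp only [add_sub_cancel_left, sub_self, bernoulliFun_two, bernoulliFun_one]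
  push_cast
  ring

lemma bernoulliFun_fract_eq {n : ℕ} (hn : n ≠ 1) {k : ℤ} {t : ℝ}
    (ht : t ∈ Set.Icc (k : ℝ) (k + 1)) :
    bernoulliFun n (Int.fract t) = bernoulliFun n (t - k) := by
  rcases ht.2.lt_or_eq with hlt | rfl
  · rw [Int.fract, Int.floor_eq_iff.2 ⟨ht.1, hlt⟩]
  · rw [← Int.cast_one, ← Int.cast_add, Int.fract_intCast, Int.cast_add, Int.cast_one,
      add_sub_cancel_left, bernoulliFun_endpoints_eq_of_ne_one hn]

lemma integral_bernoulliFun_two_fract_mul (hf : ∀ t, HasDerivAt f (f' t) t)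
    (hf' : ∀ t, HasDerivAt f' (f'' t) t) (hf'' : Continuous f'') :
    ∫ t in (0 : ℝ)..K, (bernoulliFun 2 (Int.fract t) : ℂ) * f'' t
      = (f' K - f' 0) / 6 - (2 * ∑ k ∈ range (K + 1), f k - f 0 - f K)
        + 2 * ∫ t in (0 : ℝ)..K, f t := by
  have hf_cont : Continuous f := continuous_iff_continuousAt.2 fun t => (hf t).continuousAt
  have hunit_eq (k : ℕ) : Set.EqOn (fun t => (bernoulliFun 2 (Int.fract t) : ℂ) * f'' t)
      (fun t => (bernoulliFun 2 (t - k) : ℂ) * f'' t) (Set.uIcc k (k + 1)) := fun t ht => by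
    rw [Set.uIcc_of_le (by linarith)] at ht
    simp only [bernoulliFun_fract_eq (by norm_num : 2 ≠ 1) (k := k) (by exact_mod_cast ht),
      Int.cast_natCast]
  have hunit (k : ℕ) : ∫ t in (k : ℝ)..k + 1, (bernoulliFun 2 (Int.fract t) : ℂ) * f'' t
      = (f' (k + 1) - f' k) / 6 - (f k + f (k + 1)) + 2 * ∫ t in (k : ℝ)..k + 1, f t := by
    rw [← integral_bernoulliFun_two_mul hf hf' hf'' k,
      intervalIntegral.integral_congr (hunit_eq k)]
  have hsplit (g : ℝ → ℂ)
      (hg : ∀ k : ℕ, IntervalIntegrable g MeasureTheory.volume k (k + 1)) :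
      ∫ t in (0 : ℝ)..K, g t = ∑ k ∈ range K, ∫ t in (k : ℝ)..k + 1, g t := by
    simpa using (intervalIntegral.sum_integral_adjacent_intervals (a := fun k : ℕ => (k : ℝ))
      (n := K) (fun k _ => by simpa using hg k)).symm
  have hf'_tel := Finset.sum_range_sub (fun k : ℕ => f' k) K
  have hf_succ := Finset.sum_range_succ (fun k : ℕ => f k) K
  have hf_succ' := Finset.sum_range_succ' (fun k : ℕ => f k) K
  push_cast at hf'_tel hf_succ'
  rw [hsplit _ fun k => ?_, Finset.sum_congr rfl fun k _ => hunit k, hsplit _ fun k => ?_,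
    Finset.sum_add_distrib, Finset.sum_sub_distrib, ← Finset.sum_div, Finset.sum_add_distrib,
    ← Finset.mul_sum, hf'_tel]
  · linear_combination hf_succ + hf_succ'
  · exact hf_cont.intervalIntegrable _ _
  · exact (intervalIntegrable_congr ((hunit_eq k).mono Set.uIoc_subset_uIcc)).2
      ((by fun_prop : Continuous _).intervalIntegrable _ _)

lemma hasSum_intervalFourierCoeff_add_neg (hf : ∀ t, HasDerivAt f (f' t) t)
    (hf' : ∀ t, HasDerivAt f' (f'' t) t) (hf'' : Continuous f'') :
    HasSum (fun m : ℕ => (2 * (f' K - f' 0)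
        - (intervalFourierCoeff K f'' m + intervalFourierCoeff K f'' (-m))) / (4 * π ^ 2 * m ^ 2))
      (∑ k ∈ range (K + 1), f k - (f 0 + f K) / 2 - ∫ t in (0 : ℝ)..K, f t) := by
  have hzeta : HasSum (fun m : ℕ => 1 / (m : ℂ) ^ 2) ((π : ℂ) ^ 2 / 6) := by
    simpa using hasSum_ofReal.2 hasSum_zeta_two
  have h := ((hzeta.mul_left (2 * (f' K - f' 0))).sub
    (hasSum_div_sq_intervalFourierCoeff_add_neg K hf'')).div_const (4 * π ^ 2)
  have hkernel : ∫ t in (0 : ℝ)..K, 2 * π ^ 2 * (bernoulliFun 2 (Int.fract t) : ℂ) * f'' t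
      = 2 * π ^ 2 * ∫ t in (0 : ℝ)..K, (bernoulliFun 2 (Int.fract t) : ℂ) * f'' t := by
    simp only [mul_assoc, intervalIntegral.integral_const_mul]
  rw [hkernel, integral_bernoulliFun_two_fract_mul K hf hf' hf''] at h
  have := ofReal_ne_zero.2 Real.pi_ne_zero
  convert! h using 1
  · ext m
    ring
  · field_simp
    ring

lemma sum_Icc_neg_eq {E : Type*} [AddCommGroup E] (h : ℤ → E) (N : ℕ) :
    ∑ m ∈ Icc (-N : ℤ) N, h m = h 0 + ∑ n ∈ range N, (h (n + 1) + h (-(n + 1))) := by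
  induction N with
  | zero => simp
  | succ N ih =>
    rw [Nat.cast_succ, Finset.sum_Icc_succ_eq_add_endpoints, ih, sum_range_succ]
    abel

lemma tendsto_sum_Icc_of_hasSum_add_neg {E : Type*} [AddCommGroup E] [TopologicalSpace E]
    [ContinuousAdd E] {h : ℤ → E} {s : E}
    (hs : HasSum (fun n : ℕ => h (n + 1) + h (-(n + 1))) s) :
    Tendsto (fun N : ℕ => ∑ m ∈ Icc (-N : ℤ) N, h m) atTop (𝓝 (h 0 + s)) := by
  simp_rw [sum_Icc_neg_eq]
  exact hs.tendsto_sum_nat.const_add _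

theorem tendsto_sum_Icc_intervalFourierCoeff {f : ℝ → ℂ} (hf : ContDiff ℝ 2 f) (K : ℕ) :
    Tendsto (fun N : ℕ => ∑ m ∈ Icc (-N : ℤ) N, intervalFourierCoeff K f m) atTop
      (𝓝 (∑ k ∈ range (K + 1), f k - (f 0 + f K) / 2)) := by
  obtain ⟨hf, -, hf'⟩ := (contDiff_succ_iff_deriv (n := 1)).1 hf
  obtain ⟨hf', -, hf''⟩ := (contDiff_succ_iff_deriv (n := 0)).1 hf'
  have hderiv (t : ℝ) := (hf t).hasDerivAt
  have hderiv' (t : ℝ) := (hf' t).hasDerivAt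
  have hpairs := (hasSum_nat_add_iff' 1).2
    (hasSum_intervalFourierCoeff_add_neg K hderiv hderiv' hf''.continuous)
  -- The `m = 0` term is `0` (division by zero), so dropping it does not change the sum.
  simp only [sum_range_one, Nat.cast_zero, zero_pow two_ne_zero, mul_zero, div_zero, sub_zero]
    at hpairs
  have h0 : intervalFourierCoeff K f 0 = ∫ t in (0 : ℝ)..K, f t := by
    simp [intervalFourierCoeff]
  convert tendsto_sum_Icc_of_hasSum_add_neg (hpairs.congr_fun fun n => ?_) using 2
  · rw [h0]
    ring
  · exact_mod_cast intervalFourierCoeff_add_neg K hderiv hderiv' hf''.continuous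
      (Int.natCast_ne_zero.2 n.succ_ne_zero)

noncomputable def thetaTerm (j : ℕ) (a b t : ℝ) : ℂ :=
  (t : ℂ) ^ j * cexp (2 * π * I * a * t + 2 * π * I * b * t ^ 2)

lemma contDiff_thetaTerm (j : ℕ) (a b : ℝ) : ContDiff ℝ 2 (thetaTerm j a b) := by
  have : ContDiff ℝ 2 ((↑) : ℝ → ℂ) := ofRealCLM.contDiff
  unfold thetaTerm
  fun_prop

lemma truncTheta_eq_sum_thetaTerm (K j : ℕ) (a b : ℝ) :
    truncTheta K j a b = ((K : ℂ) ^ j)⁻¹ * ∑ k ∈ range (K + 1), thetaTerm j a b k := by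
  simp [truncTheta, thetaTerm]

lemma IC0_sub_intCast (K j : ℕ) (a b : ℝ) (m : ℤ) :
    IC0 K j (a - m) b = ((K : ℂ) ^ j)⁻¹ * intervalFourierCoeff K (thetaTerm j a b) m := by
  rw [IC0, intervalFourierCoeff]
  congr 1
  refine intervalIntegral.integral_congr fun t _ => ?_
  rw [thetaTerm, fourier_coe_apply, mul_left_comm, ← Complex.exp_add]
  push_cast
  ring_nf

lemma thetaTerm_zero (j : ℕ) (a b : ℝ) : thetaTerm j a b 0 = if j = 0 then 1 else 0 := by
  simp [thetaTerm, zero_pow_eq]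

end TruncTheta

open TruncTheta

theorem truncTheta_poisson (K : ℕ) (hK : 1 ≤ K) (j : ℕ) (a b : ℝ) :
    ∃ L : ℂ,
      Filter.Tendsto
        (fun M : ℕ => ∑ m ∈ Finset.Icc (-(M : ℤ)) (M : ℤ), IC0 K j (a - (m : ℝ)) b)
        Filter.atTop (nhds L) ∧
      truncTheta K j a b =
        (1/2 : ℂ) * (if j = 0 then 1 else 0) +
        (1/2 : ℂ) * Complex.exp (2 * (Real.pi : ℂ) * Complex.I * (a : ℂ) * (K : ℂ) +
          2 * (Real.pi : ℂ) * Complex.I * (b : ℂ) * (K : ℂ) ^ 2) + L := by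
  refine ⟨((K : ℂ) ^ j)⁻¹ * (∑ k ∈ range (K + 1), thetaTerm j a b k
    - (thetaTerm j a b 0 + thetaTerm j a b K) / 2), ?_, ?_⟩
  · simpa only [IC0_sub_intCast, ← Finset.mul_sum] using
      (tendsto_sum_Icc_intervalFourierCoeff (contDiff_thetaTerm j a b) K).const_mul _
  · have hKj : (K : ℂ) ^ j ≠ 0 := pow_ne_zero _ (Nat.cast_ne_zero.2 (by omega))
    have hthetaK : thetaTerm j a b K = (K : ℂ) ^ j * Complex.exp (2 * π * I * a * K
        + 2 * π * I * b * (K : ℂ) ^ 2) := by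
      simp [thetaTerm]
    rw [truncTheta_eq_sum_thetaTerm, thetaTerm_zero, hthetaK]
    split_ifs with hj
    · simp only [hj, pow_zero, inv_one, one_mul]
      ring
    · field_simp
      ring
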